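/- arXiv:0905.3940 — 3 statements merged into one kernel-verified Lean document; each statement's English description precedes it below -/
import Mathlib

section
/- Let k be a field, and let T be a k-linear, Hom-finite pretriangulated (triangulated) category admitting an additive generator M, i.e. every object of T is a direct summand of a finite direct sum of copies of M. Then the endomorphism algebra B = End_T(M) is a self-injective finite-dimensional k-algebra, i.e. B is injective as a module over itself. -/
open CategoryTheory Limits

/-- **Proposition 3.9.** Let `k` be a field and `T` a `k`-linear, Hom-finite
(pre)triangulated category with an additive generator `M` (every object is a direct
summand of a finite direct sum of copies of `M`).  Then `B = End_T(M)` is a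
self-injective finite-dimensional `k`-algebra. -/
theorem endomorphism_algebra_of_additive_generator_selfinjective
    (k : Type*) [Field k]
    (T : Type*) [Category T] [Preadditive T] [CategoryTheory.Linear k T]
    [HasZeroObject T] [HasShift T ℤ] [∀ n : ℤ, (shiftFunctor T n).Additive]
    [Pretriangulated T] [HasFiniteBiproducts T]
    (homFinite : ∀ X Y : T, FiniteDimensional k (X ⟶ Y))
    (M : T)
    (hgen : ∀ X : T, ∃ (n : ℕ) (s : X ⟶ biproduct (fun _ : Fin n => M))
      (r : biproduct (fun _ : Fin n => M) ⟶ X), s ≫ r = 𝟙 X) :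
    Module.Injective (End M) (End M) ∧ FiniteDimensional k (End M) := by
  have hfin : FiniteDimensional k (End M) := homFinite M M
  refine ⟨?_, hfin⟩
  have hnk : IsNoetherian k (End M) := IsNoetherian.iff_fg.mpr hfin
  have hnB : IsNoetherian (End M) (End M) := isNoetherian_of_tower k hnk
  apply Module.Baer.injective
  intro I φ
  obtain ⟨m, b, hspan⟩ :=
    Submodule.fg_iff_exists_fin_generating_family.mp (IsNoetherian.noetherian I)
  have hmemI : ∀ i, b i ∈ I := fun i => hspan ▸ Submodule.subset_span ⟨i, rfl⟩
  let E : (M ⟶ M) → End M := fun f => f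
  let g : M ⟶ ⨁ (fun _ : Fin m => M) := biproduct.lift (fun i => (b i : End M))
  have key : ∀ u : (⨁ (fun _ : Fin m => M)) ⟶ M,
      E (g ≫ u) = ∑ i, E (biproduct.ι (fun _ : Fin m => M) i ≫ u) * b i := by
    intro u
    show g ≫ u = _
    conv_lhs => rw [← Category.id_comp u, ← biproduct.total, Preadditive.sum_comp,
      Preadditive.comp_sum]
    refine Finset.sum_congr rfl fun i _ => ?_
    have : E (biproduct.ι (fun _ : Fin m => M) i ≫ u) * b i
        = b i ≫ (biproduct.ι (fun _ : Fin m => M) i ≫ u) := rfl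
    rw [this]
    have hg : g ≫ biproduct.π (fun _ : Fin m => M) i = b i := biproduct.lift_π _ _
    rw [← hg]
    simp [Category.assoc]
  have hgu : ∀ u : (⨁ (fun _ : Fin m => M)) ⟶ M, E (g ≫ u) ∈ I := by
    intro u
    rw [key u]
    exact Submodule.sum_mem I fun i _ =>
      I.smul_mem (E (biproduct.ι (fun _ : Fin m => M) i ≫ u)) (hmemI i)
  let w : M ⟶ ⨁ (fun _ : Fin m => M) :=
    biproduct.lift (fun i => (φ ⟨b i, hmemI i⟩ : End M))
  have hw : ∀ u : (⨁ (fun _ : Fin m => M)) ⟶ M,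
      E (w ≫ u) = φ ⟨E (g ≫ u), hgu u⟩ := by
    intro u
    have hx : (⟨E (g ≫ u), hgu u⟩ : I)
        = ∑ i, E (biproduct.ι (fun _ : Fin m => M) i ≫ u) • ⟨b i, hmemI i⟩ := by
      apply Subtype.ext
      push_cast
      rw [key u]
      refine Finset.sum_congr rfl fun i _ => ?_
      rw [smul_eq_mul]
    rw [hx, map_sum]
    show w ≫ u = _
    conv_lhs => rw [← Category.id_comp u, ← biproduct.total, Preadditive.sum_comp,
      Preadditive.comp_sum]
    refine Finset.sum_congr rfl fun i _ => ?_
    rw [map_smul, smul_eq_mul]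
    have : E (biproduct.ι (fun _ : Fin m => M) i ≫ u) * φ ⟨b i, hmemI i⟩
        = (φ ⟨b i, hmemI i⟩ : End M) ≫ (biproduct.ι (fun _ : Fin m => M) i ≫ u) := rfl
    rw [this]
    have hwp : w ≫ biproduct.π (fun _ : Fin m => M) i = (φ ⟨b i, hmemI i⟩ : End M) :=
      biproduct.lift_π _ _
    rw [← hwp]
    simp [Category.assoc]
  obtain ⟨C, h, δ, hdist⟩ := Pretriangulated.distinguished_cocone_triangle g
  obtain ⟨p, s, r, hsr⟩ := hgen C
  have hgh : g ≫ h = 0 := Pretriangulated.comp_distTriang_mor_zero₁₂ _ hdist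
  have hwhs : w ≫ (h ≫ s) = 0 := by
    apply biproduct.hom_ext
    intro j
    have h2 : (w ≫ (h ≫ s)) ≫ biproduct.π (fun _ : Fin p => M) j
        = E (w ≫ ((h ≫ s) ≫ biproduct.π (fun _ : Fin p => M) j)) := by
      rw [Category.assoc]
    rw [h2, hw ((h ≫ s) ≫ biproduct.π (fun _ : Fin p => M) j)]
    have h0 : (⟨E (g ≫ ((h ≫ s) ≫ biproduct.π (fun _ : Fin p => M) j)), hgu _⟩ : I) = 0 := by
      apply Subtype.ext
      show g ≫ ((h ≫ s) ≫ biproduct.π (fun _ : Fin p => M) j) = (0 : M ⟶ M)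
      rw [← Category.assoc, ← Category.assoc, hgh]
      simp
    rw [h0, map_zero]
    simp
  have hwh : w ≫ h = 0 := by
    have h3 : w ≫ h = (w ≫ (h ≫ s)) ≫ r := by
      rw [Category.assoc, Category.assoc, hsr, Category.comp_id]
    rw [h3, hwhs, Limits.zero_comp]
  obtain ⟨e₀, he₀⟩ := Pretriangulated.Triangle.coyoneda_exact₂ _ hdist w hwh
  let e : End M := e₀
  have he : w = (e : M ⟶ M) ≫ g := he₀
  refine ⟨{ toFun := fun x => x * e, map_add' := fun x y => add_mul x y e,
            map_smul' := fun c x => by simp [smul_eq_mul, mul_assoc] }, ?_⟩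
  intro x hx
  obtain ⟨c, hc⟩ := (Submodule.mem_span_range_iff_exists_fun _).mp (hspan ▸ hx)
  let u : (⨁ (fun _ : Fin m => M)) ⟶ M := biproduct.desc (fun i => (c i : End M))
  have hgux : E (g ≫ u) = x := by
    rw [key u, ← hc]
    refine Finset.sum_congr rfl fun i _ => ?_
    rw [smul_eq_mul]
    congr 1
    show E (biproduct.ι (fun _ : Fin m => M) i ≫ u) = c i
    show biproduct.ι (fun _ : Fin m => M) i ≫ u = (c i : End M)
    exact biproduct.ι_desc _ _
  have h4 : φ ⟨x, hx⟩ = E (w ≫ u) := by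
    rw [hw u]
    congr 1
    exact Subtype.ext hgux.symm
  show x * e = φ ⟨x, hx⟩
  rw [h4]
  show e ≫ x = w ≫ u
  rw [he, ← hgux]
  show e ≫ (g ≫ u) = (e ≫ g) ≫ u
  rw [Category.assoc]
end

section
/- Let k be a field, T a k-linear, Hom-finite pretriangulated (triangulated) category with an additive generator M, and set B = End_T(M). Then for every finitely presented (left) B-module X one has Ext^1_B(X, B) = 0. -/
/-!
`B = End M` is self-injective, so `Ext¹_B(-, B)` vanishes on all modules. As `B` is
finite-dimensional, hence noetherian, Baer's criterion only needs maps `φ` from finitely generated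
left ideals `Bf₁ + ⋯ + Bfₘ`. Put `f = (fᵢ), g = (φ fᵢ) : M ⟶ Mᵐ`. Linearity of `φ` says every
`u : Mᵐ ⟶ M` killing `f` kills `g`; since every object is a summand of some `Mⁿ`, `g` is then
killed by the third morphism `Mᵐ ⟶ Z` of a triangle on `f`, so `g = h ≫ f` and `φ` is right
multiplication by `h`.
-/

open CategoryTheory Limits Opposite

universe v u

lemma isZero_Ext_succ_of_injective {R : Type*} [Ring R] {C : Type*} [Category* C] [Abelian C]
    [Linear R C] [EnoughProjectives C] (X Y : C) [Injective Y] (n : ℕ) :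
    IsZero (((Ext R C (n + 1)).obj (op X)).obj Y) := by
  let P : ProjectiveResolution X := (HasProjectiveResolution.out (Z := X)).some
  refine IsZero.of_iso ?_ (P.isoExt (n + 1) Y)
  rw [← HomologicalComplex.exactAt_iff_isZero_homology,
    HomologicalComplex.exactAt_iff' _ n (n + 1) (n + 2) (by simp) (by simp),
    ShortComplex.moduleCat_exact_iff]
  intro (x : P.complex.X (n + 1) ⟶ Y) (hx : P.complex.d (n + 2) (n + 1) ≫ x = 0)
  have hP : (P.complex.sc' (n + 2) (n + 1) n).Exact :=
    (HomologicalComplex.exactAt_iff' _ _ _ _ (by simp) (by simp)).mp (P.complex_exactAt_succ n)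
  exact ⟨hP.descToInjective x hx, hP.comp_descToInjective x hx⟩

/-- The hypothesis says that `f i ↦ g i` is a well-defined `R`-linear map on the left ideal
generated by the `f i`; the conclusion, that it is right multiplication by some `a`. -/
lemma Module.Baer.of_forall_exists_mul_eq {R : Type*} [Ring R] [IsNoetherianRing R]
    (h : ∀ (m : ℕ) (f g : Fin m → R),
      (∀ c : Fin m → R, ∑ i, c i * f i = 0 → ∑ i, c i * g i = 0) → ∃ a, ∀ i, g i = f i * a) :
    Module.Baer R R := by
  intro I φ
  obtain ⟨m, f, rfl⟩ :=
    Submodule.fg_iff_exists_fin_generating_family.mp (IsNoetherian.noetherian I)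
  have hf : ∀ i, f i ∈ Submodule.span R (Set.range f) := fun i => Submodule.subset_span ⟨i, rfl⟩
  have hφ : ∀ c : Fin m → R, ∀ hc, φ ⟨∑ i, c i * f i, hc⟩ = ∑ i, c i * φ ⟨f i, hf i⟩ := by
    intro c hc
    have hsum : (⟨∑ i, c i * f i, hc⟩ : Submodule.span R (Set.range f)) =
        ∑ i, c i • ⟨f i, hf i⟩ := Subtype.ext (by simp)
    simp only [hsum, map_sum, map_smul, smul_eq_mul]
  obtain ⟨a, ha⟩ := h m f (fun i => φ ⟨f i, hf i⟩) fun c hc => by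
    rw [← hφ c (hc ▸ zero_mem _)]
    exact (congrArg φ (Subtype.ext hc)).trans φ.map_zero
  refine ⟨LinearMap.toSpanSingleton R R a, fun x hx => ?_⟩
  obtain ⟨c, rfl⟩ := (Submodule.mem_span_range_iff_exists_fun R).mp hx
  simp only [LinearMap.toSpanSingleton_apply, smul_eq_mul, Finset.sum_mul, mul_assoc, ← ha]
  exact (hφ c hx).symm

lemma Pretriangulated.exists_comp_eq_of_forall_comp_eq_zero {T : Type*} [Category T]
    [Preadditive T] [HasZeroObject T] [HasShift T ℤ] [∀ n : ℤ, (shiftFunctor T n).Additive]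
    [Pretriangulated T] {A N : T} {f g : A ⟶ N}
    (hfg : ∀ (Z : T) (v : N ⟶ Z), f ≫ v = 0 → g ≫ v = 0) : ∃ h : A ⟶ A, h ≫ f = g := by
  obtain ⟨Z, v, w, hT⟩ := Pretriangulated.distinguished_cocone_triangle f
  obtain ⟨h, hh⟩ := Pretriangulated.Triangle.coyoneda_exact₂ _ hT g
    (hfg Z v (Pretriangulated.comp_distTriang_mor_zero₁₂ _ hT))
  exact ⟨h, hh.symm⟩

section AdditiveGenerator

variable {T : Type*} [Category T] [Preadditive T] [HasFiniteBiproducts T]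

def IsAdditiveGenerator (M : T) : Prop :=
  ∀ X : T, ∃ (n : ℕ) (s : X ⟶ ⨁ fun _ : Fin n => M) (r : (⨁ fun _ : Fin n => M) ⟶ X),
    s ≫ r = 𝟙 X

lemma IsAdditiveGenerator.comp_eq_zero {M : T} (hM : IsAdditiveGenerator M) {A N : T}
    {f g : A ⟶ N} (hfg : ∀ u : N ⟶ M, f ≫ u = 0 → g ≫ u = 0) {Z : T} (v : N ⟶ Z)
    (hv : f ≫ v = 0) : g ≫ v = 0 := by
  obtain ⟨n, s, r, hsr⟩ := hM Z
  have hvs : g ≫ v ≫ s = 0 := biproduct.hom_ext _ _ fun j => by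
    simpa using hfg (v ≫ s ≫ biproduct.π _ j) (by simp [reassoc_of% hv])
  rw [← Category.comp_id v, ← hsr, reassoc_of% hvs, zero_comp]

lemma IsAdditiveGenerator.exists_mul_eq [HasZeroObject T] [HasShift T ℤ]
    [∀ n : ℤ, (shiftFunctor T n).Additive] [Pretriangulated T] {M : T}
    (hM : IsAdditiveGenerator M) {m : ℕ} (f g : Fin m → End M)
    (hfg : ∀ c : Fin m → End M, ∑ i, c i * f i = 0 → ∑ i, c i * g i = 0) :
    ∃ a, ∀ i, g i = f i * a := by
  have lift_comp (e : Fin m → End M) (u : (⨁ fun _ : Fin m => M) ⟶ M) :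
      biproduct.lift e ≫ u = ∑ i, e i ≫ biproduct.ι (fun _ : Fin m => M) i ≫ u := by
    simp [biproduct.lift_eq, Preadditive.sum_comp]
  have hker (u : (⨁ fun _ : Fin m => M) ⟶ M) (hu : biproduct.lift f ≫ u = 0) :
      biproduct.lift g ≫ u = 0 := by
    rw [lift_comp] at hu ⊢
    exact hfg (fun i => biproduct.ι (fun _ : Fin m => M) i ≫ u) hu
  obtain ⟨a, ha⟩ :=
    Pretriangulated.exists_comp_eq_of_forall_comp_eq_zero fun _ => hM.comp_eq_zero hker
  exact ⟨a, fun i => by simpa using (congrArg (· ≫ biproduct.π _ i) ha).symm⟩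

end AdditiveGenerator

/-- The main step in the proof of **Proposition 3.9**: if `T` is a `k`-linear, Hom-finite
(pre)triangulated category with an additive generator `M` and `B = End_T(M)`, then
`Ext¹_B(X, B) = 0` for every finitely presented (left) `B`-module `X`. -/
theorem ext_one_vanishes_over_endomorphism_algebra_of_additive_generator
    (k : Type*) [Field k]
    (T : Type u) [Category.{v} T] [Preadditive T] [CategoryTheory.Linear k T]
    [HasZeroObject T] [HasShift T ℤ] [∀ n : ℤ, (shiftFunctor T n).Additive]
    [Pretriangulated T] [HasFiniteBiproducts T]
    (homFinite : ∀ X Y : T, FiniteDimensional k (X ⟶ Y))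
    (M : T)
    (hgen : ∀ X : T, ∃ (n : ℕ) (s : X ⟶ biproduct (fun _ : Fin n => M))
      (r : biproduct (fun _ : Fin n => M) ⟶ X), s ≫ r = 𝟙 X)
    (X : ModuleCat.{v} (End M)) (hX : Module.FinitePresentation (End M) X) :
    Subsingleton (((Ext ℤ (ModuleCat.{v} (End M)) 1).obj (op X)).obj
      (ModuleCat.of (End M) (End M))) := by
  have : FiniteDimensional k (End M) := homFinite M M
  have : IsNoetherianRing (End M) := isNoetherian_of_tower k inferInstance
  have : Module.Injective (End M) (End M) :=
    (Module.Baer.of_forall_exists_mul_eq fun _ f g =>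
      IsAdditiveGenerator.exists_mul_eq hgen f g).injective
  have : Injective (ModuleCat.of (End M) (End M)) :=
    Module.injective_object_of_injective_module _ _
  exact ModuleCat.subsingleton_of_isZero (isZero_Ext_succ_of_injective (R := ℤ) X _ 0)
end

section
/- Let R be a commutative noetherian ring and let X and Y be finitely generated reflexive R-modules with Ext^1_R(X, R) = 0 and Ext^1_R(Y, R) = 0. Suppose there exist short exact sequences 0 → X* → P → X → 0 and 0 → Y* → Q → Y → 0 of R-modules with P and Q finitely generated free, where (−)* denotes Hom_R(−, R). Then there is an isomorphism of R-modules Ext^1_R(X, Y) ≅ Ext^1_R(Y, X). -/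
/-!
For `0 → K → P → M → 0` exact with `P` projective, `Ext¹(M, W)` is the cokernel of the
restriction `Hom(P, W) → Hom(K, W)`. For `K = X*` and `W = R`, the vanishing of `Ext¹(X, R)`
says that every functional on `X*` extends to `P`, hence so does every map from `X*` to a finite
free module. Thus the maps `X* → W` that extend to `P` are exactly those factoring through a
finite free module. Transposition `Hom(X*, Y) ≅ Hom(Y*, X)`, available by reflexivity, preserves
factoring through finite free modules, since their duals are finite free; so it identifies the two
cokernels `Ext¹(X, Y)` and `Ext¹(Y, X)`.
-/

open CategoryTheory

universe u

/-- `ModuleExt1 R M N` is the `R`-module `Ext¹_R(M, N)`. -/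
noncomputable def ModuleExt1 (R : Type u) [CommRing R]
    (M N : Type u) [AddCommGroup M] [Module R M] [AddCommGroup N] [Module R N] :
    ModuleCat.{u} R :=
  ((Ext R (ModuleCat.{u} R) 1).obj (Opposite.op (ModuleCat.of R M))).obj (ModuleCat.of R N)

open Limits

universe v

namespace CategoryTheory.ProjectiveResolution

variable {C : Type u} [Category.{v} C] [Abelian C]

noncomputable def ofShortExact {S : ShortComplex C} (hS : S.ShortExact) [Projective S.X₂]
    (Q : ProjectiveResolution S.X₁) : ProjectiveResolution S.X₃ :=
  -- `Q.π.f 0`, but typed with codomain `S.X₁` rather than `((single₀ C).obj S.X₁).X 0`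
  let π₀ := (Q.complex.toSingle₀Equiv S.X₁ Q.π).1
  have hπ₀ : Q.complex.d 1 0 ≫ π₀ = 0 := (Q.complex.toSingle₀Equiv S.X₁ Q.π).2
  have : Epi π₀ := inferInstanceAs (Epi (Q.π.f 0))
  have : Mono S.f := hS.mono_f
  { complex := Q.complex.augment (π₀ ≫ S.f) (by rw [reassoc_of% hπ₀, zero_comp])
    projective
      | 0 => ‹Projective S.X₂›
      | n + 1 => Q.projective n
    π := (ChainComplex.toSingle₀Equiv _ _).symm ⟨S.g, show (π₀ ≫ S.f) ≫ S.g = 0 by simp⟩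
    quasiIso := ⟨fun n => by
      match n with
      | 0 =>
        rw [ChainComplex.quasiIsoAt₀_iff, ShortComplex.quasiIso_iff_of_zeros']
        · refine (ShortComplex.exact_and_epi_g_iff_of_iso
            (S₂ := ShortComplex.mk (π₀ ≫ S.f) S.g (by simp)) ?_).2 ⟨?_, hS.epi_g⟩
          · exact ShortComplex.isoMk (Iso.refl _) (Iso.refl _) (Iso.refl _)
              ((Category.id_comp _).trans (Category.comp_id _).symm)
              (by
                refine (Category.id_comp _).trans (Eq.trans ?_ (Category.comp_id _).symm)
                exact (ChainComplex.toSingle₀Equiv_symm_apply_f_zero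
                  (C := Q.complex.augment _ _) (X := S.X₃) _ _).symm)
          · exact (ShortComplex.exact_iff_of_epi_of_isIso_of_mono
              { τ₁ := π₀, τ₂ := 𝟙 S.X₂, τ₃ := 𝟙 S.X₃ : ShortComplex.mk (π₀ ≫ S.f) S.g _ ⟶ S }).2
              hS.exact
        all_goals rfl
      | 1 =>
        rw [quasiIsoAt_iff_exactAt' _ _ (ChainComplex.exactAt_succ_single_obj _ _),
          HomologicalComplex.exactAt_iff' _ 2 1 0 (by simp) (by simp)]
        exact (ShortComplex.exact_iff_of_epi_of_isIso_of_mono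
          { τ₁ := 𝟙 _, τ₂ := 𝟙 _, τ₃ := S.f :
            ShortComplex.mk _ _ hπ₀ ⟶ ShortComplex.mk (Q.complex.d 1 0) (π₀ ≫ S.f) _ }).1 Q.exact₀
      | n + 2 =>
        rw [quasiIsoAt_iff_exactAt' _ _ (ChainComplex.exactAt_succ_single_obj _ _),
          HomologicalComplex.exactAt_iff' _ (n + 3) (n + 2) (n + 1) (by simp) (by simp)]
        exact Q.exact_succ n⟩ }

end CategoryTheory.ProjectiveResolution

noncomputable def LinearMap.kerQuotRangeEquivOfExact {R : Type*} [Ring R] {A B C K : Type*}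
    [AddCommGroup A] [Module R A] [AddCommGroup B] [Module R B] [AddCommGroup C] [Module R C]
    [AddCommGroup K] [Module R K] (f : A →ₗ[R] B) (g : B →ₗ[R] C) (hfg : ∀ a, g (f a) = 0)
    (u : K →ₗ[R] B) (f' : A →ₗ[R] K) (hu : Function.Injective u) (hug : Function.Exact u g)
    (hf : u ∘ₗ f' = f) :
    (LinearMap.ker g ⧸ LinearMap.range (f.codRestrict (LinearMap.ker g) hfg)) ≃ₗ[R]
      (K ⧸ LinearMap.range f') :=
  let e : K ≃ₗ[R] LinearMap.ker g :=
    LinearEquiv.ofInjective u hu ≪≫ₗ LinearEquiv.ofEq _ _ hug.linearMap_ker_eq.symm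
  (Submodule.Quotient.equiv _ _ e (by
    rw [← LinearMap.range_comp]
    congr 1
    ext a
    simp [e, ← hf])).symm

namespace CategoryTheory

variable {R : Type*} [Ring R] {C : Type u} [Category.{v} C] [Abelian C] [Linear R C]

theorem ShortComplex.Exact.leftComp_exact {S : ShortComplex C} (hS : S.Exact) [Epi S.g] (W : C) :
    Function.Exact (Linear.leftComp R W S.g) (Linear.leftComp R W S.f) := by
  intro k
  refine ⟨fun hk => hS.desc' k hk, ?_⟩
  rintro ⟨l, rfl⟩
  exact (S.zero_assoc l).trans zero_comp

theorem Linear.leftComp_injective {X Y : C} (f : X ⟶ Y) [Epi f] (W : C) :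
    Function.Injective (Linear.leftComp R W f) :=
  fun _ _ h => (cancel_epi f).1 h

variable [EnoughProjectives C]

theorem ShortComplex.ShortExact.nonempty_extOne_linearEquiv_quotient {S : ShortComplex C}
    (hS : S.ShortExact)
    [Projective S.X₂] (W : C) :
    Nonempty (((Ext R C 1).obj (Opposite.op S.X₃)).obj W ≃ₗ[R]
      ((S.X₁ ⟶ W) ⧸ LinearMap.range (Linear.leftComp R W S.f))) := by
  let Q := ProjectiveResolution.of S.X₁
  let E := ProjectiveResolution.ofShortExact hS Q
  let D := E.complex.linearYonedaObj R W
  let T := D.sc' 0 1 2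
  let π₀ := (Q.complex.toSingle₀Equiv S.X₁ Q.π).1
  have : Epi π₀ := inferInstanceAs (Epi (Q.π.f 0))
  exact ⟨(E.isoExt 1 W ≪≫ D.homologyIsoSc' 0 1 2 (by simp) (by simp) ≪≫
    T.moduleCatHomologyIso).toLinearEquiv ≪≫ₗ
    LinearMap.kerQuotRangeEquivOfExact T.f.hom T.g.hom T.moduleCat_zero_apply
      (Linear.leftComp R W π₀) (Linear.leftComp R W S.f) (Linear.leftComp_injective π₀ W)
      (Q.exact₀.leftComp_exact W) (by ext; exact (Category.assoc _ _ _).symm)⟩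

end CategoryTheory

section ModuleExt

variable {R : Type u} [CommRing R]

theorem nonempty_moduleExt1_linearEquiv_quotient {K P M : Type u} [AddCommGroup K] [Module R K]
    [AddCommGroup P] [Module R P] [AddCommGroup M] [Module R M] [Module.Projective R P]
    (i : K →ₗ[R] P) (p : P →ₗ[R] M) (hi : Function.Injective i) (hp : Function.Surjective p)
    (hip : Function.Exact i p) (W : Type u) [AddCommGroup W] [Module R W] :
    Nonempty (ModuleExt1 R M W ≃ₗ[R] (K →ₗ[R] W) ⧸ LinearMap.range (LinearMap.lcomp R W i)) := by
  let S := ModuleCat.shortComplexOfCompEqZero i p hip.linearMap_comp_eq_zero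
  obtain ⟨e⟩ := (ModuleCat.shortComplex_shortExact S hip hi hp).nonempty_extOne_linearEquiv_quotient
    (R := R) (ModuleCat.of R W)
  let h : (S.X₁ ⟶ ModuleCat.of R W) ≃ₗ[R] (K →ₗ[R] W) := ModuleCat.homLinearEquiv
  refine ⟨e ≪≫ₗ Submodule.Quotient.equiv _ _ h ?_⟩
  have hh : h.toLinearMap ∘ₗ Linear.leftComp R _ S.f = LinearMap.lcomp R W i ∘ₗ
      (ModuleCat.homLinearEquiv : (S.X₂ ⟶ ModuleCat.of R W) ≃ₗ[R] (P →ₗ[R] W)).toLinearMap :=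
    rfl
  rw [← LinearMap.range_comp, hh]
  exact LinearMap.range_comp_of_range_eq_top _ (LinearEquiv.range _)

theorem lcomp_surjective_of_subsingleton_moduleExt1 {K P M : Type u} [AddCommGroup K]
    [Module R K] [AddCommGroup P] [Module R P] [AddCommGroup M] [Module R M]
    [Module.Projective R P] (i : K →ₗ[R] P) (p : P →ₗ[R] M) (hi : Function.Injective i)
    (hp : Function.Surjective p) (hip : Function.Exact i p) (hM : Subsingleton (ModuleExt1 R M R)) :
    Function.Surjective (LinearMap.lcomp R R i) := by
  obtain ⟨e⟩ := nonempty_moduleExt1_linearEquiv_quotient i p hi hp hip R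
  have := e.symm.toEquiv.subsingleton
  exact LinearMap.range_eq_top.1 (Submodule.Quotient.subsingleton_iff.1 this)

end ModuleExt

section Extension

variable {R : Type*} [CommRing R] {K Q : Type*} [AddCommGroup K] [Module R K]
  [AddCommGroup Q] [Module R Q]

theorem LinearMap.lcomp_surjective_of_free {j : K →ₗ[R] Q}
    (hj : Function.Surjective (LinearMap.lcomp R R j)) (F : Type*) [AddCommGroup F] [Module R F]
    [Module.Free R F] [Module.Finite R F] :
    Function.Surjective (LinearMap.lcomp R F j) := by
  intro a
  let b := Module.Free.chooseBasis R F
  choose h hh using fun idx => hj (b.coord idx ∘ₗ a)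
  refine ⟨∑ idx, (h idx).smulRight (b idx), ?_⟩
  ext k
  have hk idx : h idx (j k) = b.repr (a k) idx := LinearMap.congr_fun (hh idx) k
  simp [hk, b.sum_repr]

theorem LinearMap.comp_mem_range_lcomp_of_free {j : K →ₗ[R] Q}
    (hj : Function.Surjective (LinearMap.lcomp R R j)) {F W : Type*} [AddCommGroup F]
    [Module R F] [Module.Free R F] [Module.Finite R F] [AddCommGroup W] [Module R W]
    (a : K →ₗ[R] F) (b : F →ₗ[R] W) : b ∘ₗ a ∈ LinearMap.range (LinearMap.lcomp R W j) := by
  obtain ⟨A, rfl⟩ := LinearMap.lcomp_surjective_of_free hj F a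
  exact ⟨b ∘ₗ A, rfl⟩

end Extension

section Duality

open Module

variable (R : Type*) [CommRing R] (X Y : Type*) [AddCommGroup X] [Module R X]
  [AddCommGroup Y] [Module R Y] [IsReflexive R X] [IsReflexive R Y]

/-- Transposition `f ↦ f*`, with `X**` identified with `X`. -/
noncomputable def Module.dualHomEquiv : (Dual R X →ₗ[R] Y) ≃ₗ[R] (Dual R Y →ₗ[R] X) :=
  LinearEquiv.congrRight (evalEquiv R Y) ≪≫ₗ LinearMap.lflip ≪≫ₗ
    LinearEquiv.congrRight (evalEquiv R X).symm

theorem Module.dualHomEquiv_symm : (dualHomEquiv R X Y).symm = dualHomEquiv R Y X :=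
  rfl

variable {X Y} in
theorem Module.map_dualHomEquiv_range_lcomp_le {P Q : Type*} [AddCommGroup P] [Module R P]
    [Module.Free R P] [Module.Finite R P] [AddCommGroup Q] [Module R Q] (i : Dual R X →ₗ[R] P)
    {j : Dual R Y →ₗ[R] Q} (hj : Function.Surjective (LinearMap.lcomp R R j)) :
    (LinearMap.range (LinearMap.lcomp R Y i)).map (dualHomEquiv R X Y).toLinearMap ≤
      LinearMap.range (LinearMap.lcomp R X j) := by
  rintro _ ⟨_, ⟨h, rfl⟩, rfl⟩
  -- the transpose of `h ∘ i` factors through the finite free module `P*`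
  exact LinearMap.comp_mem_range_lcomp_of_free hj h.dualMap
    ((evalEquiv R X).symm.toLinearMap ∘ₗ i.dualMap)

end Duality

theorem ext_one_symmetry_of_special_general
    (R : Type u) [CommRing R]
    (X Y : Type u) [AddCommGroup X] [Module R X] [AddCommGroup Y] [Module R Y]
    [Module.IsReflexive R X] [Module.IsReflexive R Y]
    (hX : Subsingleton (ModuleExt1 R X R)) (hY : Subsingleton (ModuleExt1 R Y R))
    (P : Type u) [AddCommGroup P] [Module R P] [Module.Free R P] [Module.Finite R P]
    (Q : Type u) [AddCommGroup Q] [Module R Q] [Module.Free R Q] [Module.Finite R Q]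
    (iX : Module.Dual R X →ₗ[R] P) (pX : P →ₗ[R] X)
    (hiX : Function.Injective iX) (hpX : Function.Surjective pX)
    (hexactX : Function.Exact iX pX)
    (iY : Module.Dual R Y →ₗ[R] Q) (pY : Q →ₗ[R] Y)
    (hiY : Function.Injective iY) (hpY : Function.Surjective pY)
    (hexactY : Function.Exact iY pY) :
    Nonempty ((ModuleExt1 R X Y) ≃ₗ[R] (ModuleExt1 R Y X)) := by
  obtain ⟨eX⟩ := nonempty_moduleExt1_linearEquiv_quotient iX pX hiX hpX hexactX Y
  obtain ⟨eY⟩ := nonempty_moduleExt1_linearEquiv_quotient iY pY hiY hpY hexactY X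
  have hjX := lcomp_surjective_of_subsingleton_moduleExt1 iX pX hiX hpX hexactX hX
  have hjY := lcomp_surjective_of_subsingleton_moduleExt1 iY pY hiY hpY hexactY hY
  have hmap : (LinearMap.range (LinearMap.lcomp R Y iX)).map
      (Module.dualHomEquiv R X Y).toLinearMap = LinearMap.range (LinearMap.lcomp R X iY) := by
    refine le_antisymm (Module.map_dualHomEquiv_range_lcomp_le R iX hjY) ?_
    rw [Submodule.map_equiv_eq_comap_symm, ← Submodule.map_le_iff_le_comap,
      Module.dualHomEquiv_symm]
    exact Module.map_dualHomEquiv_range_lcomp_le R iY hjX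
  exact ⟨eX ≪≫ₗ Submodule.Quotient.equiv _ _ _ hmap ≪≫ₗ eY.symm⟩

/-- **Lemma 3.4.**  Let `R` be a commutative noetherian ring and `X`, `Y` finitely generated
reflexive `R`-modules with `Ext¹_R(X, R) = 0 = Ext¹_R(Y, R)`, admitting short exact sequences
`0 → X* → P → X → 0` and `0 → Y* → Q → Y → 0` with `P`, `Q` finitely generated free
(i.e. the first syzygy of each of `X`, `Y` is its `R`-dual).  Then
`Ext¹_R(X, Y) ≅ Ext¹_R(Y, X)` as `R`-modules. -/
theorem ext_one_symmetry_of_special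
    (R : Type u) [CommRing R] [IsNoetherianRing R]
    (X Y : Type u) [AddCommGroup X] [Module R X] [AddCommGroup Y] [Module R Y]
    [Module.Finite R X] [Module.Finite R Y]
    [Module.IsReflexive R X] [Module.IsReflexive R Y]
    (hX : Subsingleton (ModuleExt1 R X R)) (hY : Subsingleton (ModuleExt1 R Y R))
    (P : Type u) [AddCommGroup P] [Module R P] [Module.Free R P] [Module.Finite R P]
    (Q : Type u) [AddCommGroup Q] [Module R Q] [Module.Free R Q] [Module.Finite R Q]
    (iX : Module.Dual R X →ₗ[R] P) (pX : P →ₗ[R] X)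
    (hiX : Function.Injective iX) (hpX : Function.Surjective pX)
    (hexactX : Function.Exact iX pX)
    (iY : Module.Dual R Y →ₗ[R] Q) (pY : Q →ₗ[R] Y)
    (hiY : Function.Injective iY) (hpY : Function.Surjective pY)
    (hexactY : Function.Exact iY pY) :
    Nonempty ((ModuleExt1 R X Y) ≃ₗ[R] (ModuleExt1 R Y X)) :=
  ext_one_symmetry_of_special_general R X Y hX hY P Q iX pX hiX hpX hexactX iY pY hiY hpY hexactY
end
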